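/- For a point uniform on the ellipse with semi-axes a ≥ b centered at the origin and transmitter at altitude H, the CDF of the Euclidean distance on the outer branch is F_d(d) = [2(d² − H²)√(1 − ℰ²) arccos(√(d² − b² − H²)/(ℰ√(d² − H²))) + 2b² arcsin(√((1 − ℰ²)(d² − b² − H²))/(bℰ))]/(π a b √(1 − ℰ²)) for √(b² + H²) < d ≤ √(a² + H²); in particular F_d(√(a² + H²)) = 1. -/

import Mathlib

/-!
For `d² = r² + H²` with `b < r ≤ a`, the event `dist ≤ d` is the ellipse cut by the disk of
radius `r`. Its vertical sections are `|y| ≤ min (b √(1 - (x/a)²)) (r √(1 - (x/r)²))`, and the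
circle is the smaller of the two exactly for `|x| ≥ x₀`, where `x₀ = √(r² - b²) / ℰ` is the
abscissa of the intersection points. Integrating both half-chords with the primitive
`(arcsin t + t √(1 - t²)) / 2` of `√(1 - t²)` gives the area
`2 r² arccos (x₀/r) + 2 a b arcsin (x₀/a)`: the algebraic terms cancel because the two curves meet
at `x₀`. Dividing by the area `π a b` of the ellipse and using `√(1 - ℰ²) = b / a` gives the
formula; at `r = x₀ = a` the area is `π a b`.
-/

open Real MeasureTheory Set

noncomputable def primitiveSqrtOneSubSq (t : ℝ) : ℝ := (arcsin t + t * √(1 - t ^ 2)) / 2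

lemma continuous_primitiveSqrtOneSubSq : Continuous primitiveSqrtOneSubSq := by
  unfold primitiveSqrtOneSubSq; fun_prop

lemma hasDerivAt_primitiveSqrtOneSubSq {t : ℝ} (ht : t ∈ Ioo (-1) 1) :
    HasDerivAt primitiveSqrtOneSubSq √(1 - t ^ 2) t := by
  have hpos : 0 < 1 - t ^ 2 := by nlinarith [ht.1, ht.2]
  have hsqrt : HasDerivAt (fun t : ℝ => √(1 - t ^ 2)) (-(2 * t) / (2 * √(1 - t ^ 2))) t := by
    simpa using ((hasDerivAt_pow 2 t).const_sub 1).sqrt hpos.ne'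
  have h : HasDerivAt primitiveSqrtOneSubSq
      ((1 / √(1 - t ^ 2) + (1 * √(1 - t ^ 2) + t * (-(2 * t) / (2 * √(1 - t ^ 2))))) / 2) t :=
    ((hasDerivAt_arcsin ht.1.ne' ht.2.ne).add ((hasDerivAt_id' t).mul hsqrt)).div_const 2
  refine h.congr_deriv ?_
  have : 0 < √(1 - t ^ 2) := sqrt_pos.2 hpos
  field_simp
  rw [sq_sqrt hpos.le]
  ring

lemma primitiveSqrtOneSubSq_neg (t : ℝ) :
    primitiveSqrtOneSubSq (-t) = -primitiveSqrtOneSubSq t := by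
  simp only [primitiveSqrtOneSubSq, arcsin_neg, neg_sq]; ring

lemma primitiveSqrtOneSubSq_one : primitiveSqrtOneSubSq 1 = π / 4 := by
  simp only [primitiveSqrtOneSubSq, arcsin_one]; norm_num; ring

lemma integral_sqrt_one_sub_sq_eq {u v : ℝ} (hu : u ∈ Icc (-1) 1) (hv : v ∈ Icc (-1) 1) :
    ∫ t in u..v, √(1 - t ^ 2) = primitiveSqrtOneSubSq v - primitiveSqrtOneSubSq u := by
  refine intervalIntegral.integral_eq_sub_of_hasDeriv_right
    continuous_primitiveSqrtOneSubSq.continuousOn (fun t ht => ?_)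
    ((by fun_prop : Continuous fun t : ℝ => √(1 - t ^ 2)).intervalIntegrable u v)
  have hsub : Ioo (min u v) (max u v) ⊆ Ioo (-1) 1 :=
    Ioo_subset_Ioo (le_min hu.1 hv.1) (max_le hu.2 hv.2)
  exact (hasDerivAt_primitiveSqrtOneSubSq (hsub ht)).hasDerivWithinAt

lemma volume_setOf_abs_snd_le {f : ℝ → ℝ} (hf : Continuous f) (hf₀ : 0 ≤ f) {s t : ℝ}
    (hst : s ≤ t) :
    volume {p : ℝ × ℝ | p.1 ∈ Icc s t ∧ |p.2| ≤ f p.1} =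
      ENNReal.ofReal (∫ x in s..t, 2 * f x) := by
  have hS : {p : ℝ × ℝ | p.1 ∈ Icc s t ∧ |p.2| ≤ f p.1} =
      {p : ℝ × ℝ | p.1 ∈ Icc s t ∧ p.2 ∈ Icc (-f p.1) (f p.1)} := by
    ext p; simp only [mem_ofPred_eq, mem_Icc, abs_le]
  have hfiber : ∀ x, volume (Prod.mk x ⁻¹' {p : ℝ × ℝ | p.1 ∈ Icc s t ∧ |p.2| ≤ f p.1}) =
      (Icc s t).indicator (fun x => ENNReal.ofReal (2 * f x)) x := by
    intro x
    by_cases hx : x ∈ Icc s t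
    · have : Prod.mk x ⁻¹' {p : ℝ × ℝ | p.1 ∈ Icc s t ∧ |p.2| ≤ f p.1} = Icc (-f x) (f x) := by
        ext y; simp only [mem_preimage, mem_ofPred_eq, and_iff_right hx]; rw [mem_Icc, abs_le]
      rw [this, indicator_of_mem hx, volume_Icc]; ring_nf
    · have : Prod.mk x ⁻¹' {p : ℝ × ℝ | p.1 ∈ Icc s t ∧ |p.2| ≤ f p.1} = ∅ := by
        ext y; simp only [mem_preimage, mem_ofPred_eq, hx, false_and, mem_empty_iff_false]
      rw [this, indicator_of_notMem hx, measure_empty]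
  rw [Measure.volume_eq_prod, Measure.prod_apply (hS ▸ measurableSet_region_between_cc
      hf.measurable.neg hf.measurable measurableSet_Icc), lintegral_congr hfiber,
    lintegral_indicator measurableSet_Icc, intervalIntegral.integral_of_le hst,
    ← integral_Icc_eq_integral_Ioc, ofReal_integral_eq_lintegral_ofReal]
  · exact (continuous_const.mul hf).integrableOn_Icc
  · exact Filter.Eventually.of_forall fun x => mul_nonneg zero_le_two (hf₀ x)

noncomputable def halfChord (c s x : ℝ) : ℝ := c * √(1 - (x / s) ^ 2)

lemma halfChord_nonneg {c : ℝ} (hc : 0 ≤ c) (s x : ℝ) : 0 ≤ halfChord c s x :=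
  mul_nonneg hc (sqrt_nonneg _)

lemma continuous_halfChord (c s : ℝ) : Continuous (halfChord c s) := by
  unfold halfChord; fun_prop

lemma sq_halfChord {c s x : ℝ} (hs : 0 < s) (hx : |x| ≤ s) :
    halfChord c s x ^ 2 = c ^ 2 * (1 - x ^ 2 / s ^ 2) := by
  have hxs : x ^ 2 ≤ s ^ 2 := sq_le_sq' (abs_le.1 hx).1 (abs_le.1 hx).2
  rw [halfChord, mul_pow, div_pow, sq_sqrt (sub_nonneg.2 ((div_le_one (by positivity)).2 hxs))]

lemma abs_le_halfChord_iff {c s x y : ℝ} (hc : 0 < c) (hs : 0 < s) (hx : |x| ≤ s) :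
    |y| ≤ halfChord c s x ↔ x ^ 2 / s ^ 2 + y ^ 2 / c ^ 2 ≤ 1 := by
  rw [← pow_le_pow_iff_left₀ (abs_nonneg y) (halfChord_nonneg hc.le s x) two_ne_zero,
    sq_halfChord hs hx, sq_abs, ← div_le_iff₀' (by positivity)]
  constructor <;> intro h <;> linarith

lemma integral_halfChord {s u v : ℝ} (c : ℝ) (hs : 0 < s)
    (hu : u ∈ Icc (-s) s) (hv : v ∈ Icc (-s) s) :
    ∫ x in u..v, halfChord c s x =
      c * s * (primitiveSqrtOneSubSq (v / s) - primitiveSqrtOneSubSq (u / s)) := by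
  have hunit : ∀ w ∈ Icc (-s) s, w / s ∈ Icc (-1) 1 := fun w hw =>
    ⟨by rw [le_div_iff₀ hs]; linarith [hw.1], by rw [div_le_iff₀ hs]; linarith [hw.2]⟩
  rw [show (fun x => halfChord c s x) = fun x => c * √(1 - (x / s) ^ 2) from rfl,
    intervalIntegral.integral_const_mul,
    intervalIntegral.integral_comp_div (fun t => √(1 - t ^ 2)) hs.ne',
    integral_sqrt_one_sub_sq_eq (hunit u hu) (hunit v hv), smul_eq_mul, mul_assoc]

lemma volume_ellipse {a b : ℝ} (ha : 0 < a) (hb : 0 < b) :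
    volume {p : ℝ × ℝ | p.1 ^ 2 / a ^ 2 + p.2 ^ 2 / b ^ 2 ≤ 1} = ENNReal.ofReal (π * a * b) := by
  have hset : {p : ℝ × ℝ | p.1 ^ 2 / a ^ 2 + p.2 ^ 2 / b ^ 2 ≤ 1} =
      {p : ℝ × ℝ | p.1 ∈ Icc (-a) a ∧ |p.2| ≤ halfChord b a p.1} := by
    ext ⟨x, y⟩
    simp only [mem_ofPred_eq]
    constructor
    · intro h
      have hx : |x| ≤ a := by
        refine abs_le_of_sq_le_sq ?_ ha.le
        have := div_nonneg (sq_nonneg y) (sq_nonneg b)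
        rw [← div_le_one (by positivity)]; linarith
      exact ⟨abs_le.1 hx, (abs_le_halfChord_iff hb ha hx).2 h⟩
    · rintro ⟨hx, hy⟩
      exact (abs_le_halfChord_iff hb ha (abs_le.2 hx)).1 hy
  rw [hset, volume_setOf_abs_snd_le (continuous_halfChord b a) (fun x => halfChord_nonneg hb.le a x)
    (by linarith), intervalIntegral.integral_const_mul,
    integral_halfChord b ha ⟨le_rfl, by linarith⟩ ⟨by linarith, le_rfl⟩, neg_div, div_self ha.ne',
    primitiveSqrtOneSubSq_neg, primitiveSqrtOneSubSq_one]
  congr 1; ring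

lemma one_sub_sq_div_sq_pos {a b : ℝ} (hb : 0 ≤ b) (hba : b < a) : 0 < 1 - b ^ 2 / a ^ 2 := by
  rw [sub_pos, div_lt_one (by nlinarith)]; nlinarith

section EllipseInterDisk

-- `hx₀r` says that the circle of radius `r` meets the ellipse at the abscissae `±x₀`
variable {a b r x₀ : ℝ} (hb : 0 < b) (hba : b < a) (hr : 0 < r) (hra : r ≤ a)
  (hx₀r : (1 - b ^ 2 / a ^ 2) * x₀ ^ 2 = r ^ 2 - b ^ 2)
include hb hba hr hra hx₀r

lemma sq_halfChord_ellipse_sub_circle {x : ℝ} (hx : |x| ≤ r) :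
    halfChord b a x ^ 2 - halfChord r r x ^ 2 = (1 - b ^ 2 / a ^ 2) * (x ^ 2 - x₀ ^ 2) := by
  rw [sq_halfChord (hb.trans hba) (hx.trans hra), sq_halfChord hr hx, mul_one_sub (r ^ 2),
    mul_div_cancel₀ _ (pow_ne_zero 2 hr.ne')]
  linear_combination hx₀r

lemma sq_le_sq_of_one_sub_mul_sq_eq : x₀ ^ 2 ≤ r ^ 2 := by
  have ha : 0 < a := hb.trans hba
  refine le_of_mul_le_mul_left ?_ (one_sub_sq_div_sq_pos hb.le hba)
  rw [hx₀r, ← sub_nonneg]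
  have : 0 ≤ b ^ 2 * (1 - r ^ 2 / a ^ 2) := by
    refine mul_nonneg (sq_nonneg b) (sub_nonneg.2 ((div_le_one (by positivity)).2 ?_))
    exact pow_le_pow_left₀ hr.le hra 2
  linear_combination this

lemma min_halfChord_eq_circle {x : ℝ} (h₁ : x₀ ^ 2 ≤ x ^ 2) (h₂ : |x| ≤ r) :
    min (halfChord b a x) (halfChord r r x) = halfChord r r x := by
  refine min_eq_right ((pow_le_pow_iff_left₀ (halfChord_nonneg hr.le r x)
    (halfChord_nonneg hb.le a x) two_ne_zero).1 ?_)
  have := sq_halfChord_ellipse_sub_circle hb hba hr hra hx₀r h₂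
  nlinarith [one_sub_sq_div_sq_pos hb.le hba]

lemma min_halfChord_eq_ellipse {x : ℝ} (h : x ^ 2 ≤ x₀ ^ 2) :
    min (halfChord b a x) (halfChord r r x) = halfChord b a x := by
  have hx : |x| ≤ r :=
    abs_le_of_sq_le_sq (h.trans (sq_le_sq_of_one_sub_mul_sq_eq hb hba hr hra hx₀r)) hr.le
  refine min_eq_left ((pow_le_pow_iff_left₀ (halfChord_nonneg hb.le a x)
    (halfChord_nonneg hr.le r x) two_ne_zero).1 ?_)
  have := sq_halfChord_ellipse_sub_circle hb hba hr hra hx₀r hx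
  nlinarith [one_sub_sq_div_sq_pos hb.le hba]

lemma halfChord_ellipse_eq_circle : halfChord b a x₀ = halfChord r r x₀ := by
  have hx₀' : |x₀| ≤ r :=
    abs_le_of_sq_le_sq (sq_le_sq_of_one_sub_mul_sq_eq hb hba hr hra hx₀r) hr.le
  exact (min_halfChord_eq_ellipse hb hba hr hra hx₀r le_rfl).symm.trans
    (min_halfChord_eq_circle hb hba hr hra hx₀r le_rfl hx₀')

lemma integral_two_mul_min_halfChord (hx₀ : 0 ≤ x₀) :
    ∫ x in (-r)..r, 2 * min (halfChord b a x) (halfChord r r x) =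
      2 * r ^ 2 * arccos (x₀ / r) + 2 * a * b * arcsin (x₀ / a) := by
  have ha : 0 < a := hb.trans hba
  have hx₀r' : x₀ ≤ r := by
    simpa [abs_of_nonneg hx₀] using
      abs_le_of_sq_le_sq (sq_le_sq_of_one_sub_mul_sq_eq hb hba hr hra hx₀r) hr.le
  have hint : ∀ u v, IntervalIntegrable (fun x => 2 * min (halfChord b a x) (halfChord r r x))
      volume u v := fun u v =>
    ((continuous_halfChord b a).min (continuous_halfChord r r)).const_mul 2
      |>.intervalIntegrable u v
  rw [← intervalIntegral.integral_add_adjacent_intervals (hint (-r) (-x₀)) (hint (-x₀) r),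
    ← intervalIntegral.integral_add_adjacent_intervals (hint (-x₀) x₀) (hint x₀ r)]
  have hleft : ∫ x in (-r)..(-x₀), 2 * min (halfChord b a x) (halfChord r r x) =
      ∫ x in (-r)..(-x₀), 2 * halfChord r r x := by
    refine intervalIntegral.integral_congr fun x hx => ?_
    rw [uIcc_of_le (by linarith), mem_Icc] at hx
    rw [min_halfChord_eq_circle hb hba hr hra hx₀r (by nlinarith) (abs_le.2 ⟨hx.1, by linarith⟩)]
  have hmid : ∫ x in (-x₀)..x₀, 2 * min (halfChord b a x) (halfChord r r x) =
      ∫ x in (-x₀)..x₀, 2 * halfChord b a x := by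
    refine intervalIntegral.integral_congr fun x hx => ?_
    rw [uIcc_of_le (by linarith), mem_Icc] at hx
    rw [min_halfChord_eq_ellipse hb hba hr hra hx₀r (by nlinarith)]
  have hright : ∫ x in x₀..r, 2 * min (halfChord b a x) (halfChord r r x) =
      ∫ x in x₀..r, 2 * halfChord r r x := by
    refine intervalIntegral.integral_congr fun x hx => ?_
    rw [uIcc_of_le hx₀r', mem_Icc] at hx
    rw [min_halfChord_eq_circle hb hba hr hra hx₀r (by nlinarith) (abs_le.2 ⟨by linarith, hx.2⟩)]
  rw [hleft, hmid, hright, intervalIntegral.integral_const_mul,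
    intervalIntegral.integral_const_mul, intervalIntegral.integral_const_mul,
    integral_halfChord r hr ⟨le_rfl, by linarith⟩ ⟨by linarith, by linarith⟩,
    integral_halfChord b ha ⟨by linarith, by linarith⟩ ⟨by linarith, by linarith⟩,
    integral_halfChord r hr ⟨by linarith, hx₀r'⟩ ⟨by linarith, le_rfl⟩]
  simp only [neg_div, div_self hr.ne', primitiveSqrtOneSubSq_neg, primitiveSqrtOneSubSq_one,
    arccos_eq_pi_div_two_sub_arcsin]
  unfold primitiveSqrtOneSubSq
  have hchord := halfChord_ellipse_eq_circle hb hba hr hra hx₀r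
  unfold halfChord at hchord
  have hr' : r ^ 2 * (x₀ / r) = r * x₀ := by field_simp
  have ha' : a * (x₀ / a) = x₀ := by field_simp
  -- the terms `t √(1 - t²)` of the primitive cancel because the two curves meet at `x₀`
  linear_combination 2 * x₀ * hchord - 2 * √(1 - (x₀ / r) ^ 2) * hr' +
    2 * b * √(1 - (x₀ / a) ^ 2) * ha'

end EllipseInterDisk

lemma ellipse_inter_disk_eq {a b r : ℝ} (hb : 0 < b) (hr : 0 < r) (hra : r ≤ a) :
    {p : ℝ × ℝ | p.1 ^ 2 / a ^ 2 + p.2 ^ 2 / b ^ 2 ≤ 1} ∩ {p | p.1 ^ 2 + p.2 ^ 2 ≤ r ^ 2} =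
      {p | p.1 ∈ Icc (-r) r ∧ |p.2| ≤ min (halfChord b a p.1) (halfChord r r p.1)} := by
  have ha : 0 < a := hr.trans_le hra
  have hdisk : ∀ x y : ℝ, x ^ 2 + y ^ 2 ≤ r ^ 2 ↔ x ^ 2 / r ^ 2 + y ^ 2 / r ^ 2 ≤ 1 := by
    intro x y; rw [← add_div, div_le_one (by positivity)]
  ext ⟨x, y⟩
  simp only [mem_inter_iff, mem_ofPred_eq, le_min_iff, hdisk]
  constructor
  · rintro ⟨he, hd⟩
    have hx : |x| ≤ r := by
      refine abs_le_of_sq_le_sq ?_ hr.le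
      rw [← hdisk] at hd; nlinarith [sq_nonneg y]
    exact ⟨abs_le.1 hx, (abs_le_halfChord_iff hb ha (hx.trans hra)).2 he,
      (abs_le_halfChord_iff hr hr hx).2 hd⟩
  · rintro ⟨hx, he, hd⟩
    exact ⟨(abs_le_halfChord_iff hb ha ((abs_le.2 hx).trans hra)).1 he,
      (abs_le_halfChord_iff hr hr (abs_le.2 hx)).1 hd⟩

theorem volume_ellipse_inter_disk {a b r x₀ : ℝ} (hb : 0 < b) (hba : b < a) (hr : 0 < r)
    (hra : r ≤ a) (hx₀ : 0 ≤ x₀) (hx₀r : (1 - b ^ 2 / a ^ 2) * x₀ ^ 2 = r ^ 2 - b ^ 2) :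
    volume ({p : ℝ × ℝ | p.1 ^ 2 / a ^ 2 + p.2 ^ 2 / b ^ 2 ≤ 1} ∩ {p | p.1 ^ 2 + p.2 ^ 2 ≤ r ^ 2}) =
      ENNReal.ofReal (2 * r ^ 2 * arccos (x₀ / r) + 2 * a * b * arcsin (x₀ / a)) := by
  rw [ellipse_inter_disk_eq hb hr hra,
    volume_setOf_abs_snd_le ((continuous_halfChord b a).min (continuous_halfChord r r))
      (fun x => le_min (halfChord_nonneg hb.le a x) (halfChord_nonneg hr.le r x)) (by linarith),
    integral_two_mul_min_halfChord hb hba hr hra hx₀r hx₀]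

lemma setOf_sqrt_add_sq_le_eq {H d r : ℝ} (hd : 0 ≤ d) (hr : r ^ 2 = d ^ 2 - H ^ 2) :
    {p : ℝ × ℝ | √(p.1 ^ 2 + p.2 ^ 2 + H ^ 2) ≤ d} = {p | p.1 ^ 2 + p.2 ^ 2 ≤ r ^ 2} := by
  ext p
  simp only [mem_ofPred_eq, sqrt_le_iff, hr, and_iff_right hd]
  constructor <;> intro h <;> linarith

lemma volume_ellipse_inter_sqrt_le_div {a b H d r x₀ : ℝ} (hb : 0 < b) (hba : b < a) (hd : 0 ≤ d)
    (hr : 0 < r) (hra : r ≤ a) (hx₀ : 0 ≤ x₀) (hrd : r ^ 2 = d ^ 2 - H ^ 2)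
    (hx₀r : (1 - b ^ 2 / a ^ 2) * x₀ ^ 2 = r ^ 2 - b ^ 2) :
    (volume ({p : ℝ × ℝ | p.1 ^ 2 / a ^ 2 + p.2 ^ 2 / b ^ 2 ≤ 1} ∩
        {p | √(p.1 ^ 2 + p.2 ^ 2 + H ^ 2) ≤ d})).toReal /
        (volume {p : ℝ × ℝ | p.1 ^ 2 / a ^ 2 + p.2 ^ 2 / b ^ 2 ≤ 1}).toReal =
      (2 * r ^ 2 * arccos (x₀ / r) + 2 * a * b * arcsin (x₀ / a)) / (π * a * b) := by
  have ha : 0 < a := hb.trans hba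
  rw [setOf_sqrt_add_sq_le_eq hd hrd, volume_ellipse_inter_disk hb hba hr hra hx₀ hx₀r,
    volume_ellipse ha hb, ENNReal.toReal_ofReal (add_nonneg
      (mul_nonneg (by positivity) (arccos_nonneg _))
      (mul_nonneg (by positivity) (arcsin_nonneg.2 (div_nonneg hx₀ ha.le)))),
    ENNReal.toReal_ofReal (by positivity)]

theorem stmt_17_general (a b H : ℝ) (hb : 0 < b) (hba : b < a)
    (ℰ : ℝ) (hℰ : ℰ = Real.sqrt (1 - b^2 / a^2))
    (E : Set (ℝ × ℝ)) (hE : E = {p : ℝ × ℝ | p.1^2 / a^2 + p.2^2 / b^2 ≤ 1})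
    (F : ℝ → ℝ)
    (hF : ∀ d, F d =
      (volume (E ∩ {p : ℝ × ℝ | Real.sqrt (p.1^2 + p.2^2 + H^2) ≤ d})).toReal
        / (volume E).toReal) :
    (∀ d ∈ Set.Ioc (Real.sqrt (b^2 + H^2)) (Real.sqrt (a^2 + H^2)),
      F d = (2 * (d^2 - H^2) * Real.sqrt (1 - ℰ^2) *
          Real.arccos (Real.sqrt (d^2 - b^2 - H^2) / (ℰ * Real.sqrt (d^2 - H^2))) +
          2 * b^2 * Real.arcsin (Real.sqrt ((1 - ℰ^2) * (d^2 - b^2 - H^2)) / (b * ℰ)))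
        / (π * a * b * Real.sqrt (1 - ℰ^2))) ∧
    F (Real.sqrt (a^2 + H^2)) = 1 := by
  have ha : 0 < a := hb.trans hba
  have hℰ2 : ℰ ^ 2 = 1 - b ^ 2 / a ^ 2 := by
    rw [hℰ, sq_sqrt (one_sub_sq_div_sq_pos hb.le hba).le]
  have hℰpos : 0 < ℰ := hℰ ▸ sqrt_pos.2 (one_sub_sq_div_sq_pos hb.le hba)
  have hsqrt : √(1 - ℰ ^ 2) = b / a := by
    rw [hℰ2, sub_sub_cancel, ← div_pow, sqrt_sq (by positivity)]
  subst hE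
  refine ⟨fun d ⟨hd₁, hd₂⟩ => ?_, ?_⟩
  · have hd : 0 < d := (sqrt_nonneg _).trans_lt hd₁
    have hbd : b ^ 2 < d ^ 2 - H ^ 2 := by linarith [(sqrt_lt' hd).1 hd₁]
    have hda : d ^ 2 - H ^ 2 ≤ a ^ 2 := by linarith [(le_sqrt hd.le (by positivity)).1 hd₂]
    have hr2 : √(d ^ 2 - H ^ 2) ^ 2 = d ^ 2 - H ^ 2 := sq_sqrt (by nlinarith)
    have hx₀2 : (√(d ^ 2 - b ^ 2 - H ^ 2) / ℰ) ^ 2 = (d ^ 2 - b ^ 2 - H ^ 2) / ℰ ^ 2 := by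
      rw [div_pow, sq_sqrt (by linarith)]
    have harcsin : √((1 - ℰ ^ 2) * (d ^ 2 - b ^ 2 - H ^ 2)) / (b * ℰ) =
        √(d ^ 2 - b ^ 2 - H ^ 2) / ℰ / a := by
      rw [sqrt_mul (by rw [hℰ2, sub_sub_cancel]; positivity), hsqrt]
      field_simp
    rw [hF, volume_ellipse_inter_sqrt_le_div (r := √(d ^ 2 - H ^ 2))
        (x₀ := √(d ^ 2 - b ^ 2 - H ^ 2) / ℰ) hb hba hd.le (hb.trans (lt_sqrt_of_sq_lt hbd))
        (sqrt_le_iff.2 ⟨ha.le, hda⟩) (by positivity) hr2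
        (by rw [hx₀2, ← hℰ2, hr2]; field_simp; ring),
      harcsin, hsqrt, div_div, hr2]
    field_simp
  · rw [hF, volume_ellipse_inter_sqrt_le_div (r := a) (x₀ := a) hb hba (sqrt_nonneg _) ha le_rfl
        ha.le (by rw [sq_sqrt (by positivity)]; ring) (by field_simp),
      div_self ha.ne', arccos_one, arcsin_one]
    field_simp
    ring

theorem stmt_17 (a b H : ℝ) (hb : 0 < b) (hba : b < a) (hH : 0 < H)
    (ℰ : ℝ) (hℰ : ℰ = Real.sqrt (1 - b^2 / a^2))
    (E : Set (ℝ × ℝ)) (hE : E = {p : ℝ × ℝ | p.1^2 / a^2 + p.2^2 / b^2 ≤ 1})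
    (F : ℝ → ℝ)
    (hF : ∀ d, F d =
      (volume (E ∩ {p : ℝ × ℝ | Real.sqrt (p.1^2 + p.2^2 + H^2) ≤ d})).toReal
        / (volume E).toReal) :
    (∀ d ∈ Set.Ioc (Real.sqrt (b^2 + H^2)) (Real.sqrt (a^2 + H^2)),
      F d = (2 * (d^2 - H^2) * Real.sqrt (1 - ℰ^2) *
          Real.arccos (Real.sqrt (d^2 - b^2 - H^2) / (ℰ * Real.sqrt (d^2 - H^2))) +
          2 * b^2 * Real.arcsin (Real.sqrt ((1 - ℰ^2) * (d^2 - b^2 - H^2)) / (b * ℰ)))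
        / (π * a * b * Real.sqrt (1 - ℰ^2))) ∧
    F (Real.sqrt (a^2 + H^2)) = 1 :=
  stmt_17_general a b H hb hba ℰ hℰ E hE F hF
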